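/- arXiv:2001.10298 — 3 statements merged into one kernel-verified Lean document; each statement's English description precedes it below -/
import Mathlib

section
/- Let A = ⟨1, −3, 1, −3, ..., 1⟩ be the sequence in ℝ alternating between 1 and −3, starting and ending with 1, with a occurrences of −3, and let M be any sequence of points in ℝ with d_DF(A, M) ≤ 1. Then in any traversal of A and M realizing distance at most 1, every element of M is paired with exactly one element of A. -/
/-!
A traversal is monotone in both indices, so if it paired a point of `M` with two points of `A`
it would pair it with two consecutive ones, i.e. with both `1` and `-3`; no real number lies
within distance `1` of both.
-/

open Set

/-- One step of a traversal: increment one or both indices by 1. -/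
def FrStep (p q : ℕ × ℕ) : Prop :=
  (q.1 = p.1 + 1 ∧ q.2 = p.2) ∨ (q.1 = p.1 ∧ q.2 = p.2 + 1) ∨ (q.1 = p.1 + 1 ∧ q.2 = p.2 + 1)

/-- `T` is a traversal of two sequences of lengths `m` and `m'` (0-indexed):
it starts at `(0,0)`, ends at `(m-1, m'-1)`, and each step increments one or both indices. -/
def IsTraversal (m m' : ℕ) (T : List (ℕ × ℕ)) : Prop :=
  T ≠ [] ∧ T.head? = some (0, 0) ∧ T.getLast? = some (m - 1, m' - 1) ∧
    T.Chain' FrStep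

/-- The discrete Fréchet distance between two finite point sequences:
the least `r` such that some traversal keeps all paired points within distance `r`. -/
noncomputable def dDF {α : Type*} [PseudoMetricSpace α] [Inhabited α]
    (P Q : List α) : ℝ :=
  sInf { r : ℝ | ∃ T : List (ℕ × ℕ), IsTraversal P.length Q.length T ∧
    ∀ p ∈ T, dist (P.getD p.1 default) (Q.getD p.2 default) ≤ r }

/-- The sequence `⟨1, (−3, 1)^a⟩`: alternating `1, −3`, starting and ending with `1`,
with `a` occurrences of `−3`. -/
def Aseq (a : ℕ) : List ℝ := 1 :: (List.replicate a [(-3 : ℝ), 1]).flatten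

/-- The sequence `⟨−1, (3, −1)^b⟩`: alternating `−1, 3`, starting and ending with `−1`,
with `b` occurrences of `3`. -/
def Bseq (b : ℕ) : List ℝ := -1 :: (List.replicate b [(3 : ℝ), -1]).flatten

theorem FrStep.le {p q : ℕ × ℕ} (h : FrStep p q) : p ≤ q := by
  rcases h with ⟨h₁, h₂⟩ | ⟨h₁, h₂⟩ | ⟨h₁, h₂⟩ <;> exact ⟨by omega, by omega⟩

theorem FrStep.fst_eq_succ_of_snd_eq {p q : ℕ × ℕ} (h : FrStep p q) (h₂ : q.2 = p.2) :
    q.1 = p.1 + 1 := by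
  rcases h with ⟨h₁, -⟩ | ⟨-, h₂'⟩ | ⟨h₁, -⟩ <;> omega

namespace List.IsChain

variable {T : List (ℕ × ℕ)}

theorem pairwise_le_of_frStep (hc : T.IsChain FrStep) : T.Pairwise (· ≤ ·) :=
  List.isChain_iff_pairwise.mp (hc.imp fun _ _ ↦ FrStep.le)

theorem succ_mem_of_frStep (hc : T.IsChain FrStep) {i i' j : ℕ} (hi : (i, j) ∈ T)
    (hi' : (i', j) ∈ T) (hlt : i < i') : (i + 1, j) ∈ T := by
  induction T with
  | nil => simp at hi
  | cons p t ih =>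
    have hp : ∀ x ∈ t, p ≤ x := List.pairwise_cons.mp hc.pairwise_le_of_frStep |>.1
    rcases List.mem_cons.mp hi with rfl | hmem
    · obtain ⟨r, t', rfl⟩ : ∃ r t', t = r :: t' := by
        rcases List.mem_cons.mp hi' with h | h
        · simp at h; omega
        · exact List.exists_cons_of_ne_nil (List.ne_nil_of_mem h)
      have hr : r ≤ (i', j) := by
        rcases List.mem_cons.mp hi' with h | h
        · simp at h; omega
        · rcases List.mem_cons.mp h with rfl | h
          · exact le_rfl
          · exact (List.pairwise_cons.mp hc.tail.pairwise_le_of_frStep).1 _ h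
      have hstep : FrStep (i, j) r := (List.isChain_cons_cons.mp hc).1
      have hr₂ : r.2 = j := le_antisymm hr.2 hstep.le.2
      have hr₁ : r.1 = i + 1 := hstep.fst_eq_succ_of_snd_eq hr₂
      exact List.mem_cons_of_mem _ (by rw [← hr₁, ← hr₂]; exact List.mem_cons_self)
    · rcases List.mem_cons.mp hi' with rfl | hi'
      · exact absurd (hp _ hmem).1 (Nat.not_le.mpr hlt)
      · exact List.mem_cons_of_mem _ (ih hc.tail hmem hi')

theorem exists_mem_snd_eq_of_frStep (hc : T.IsChain FrStep) {p q : ℕ × ℕ}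
    (hp : T.head? = some p) (hq : T.getLast? = some q) {j : ℕ} (hpj : p.2 ≤ j) (hjq : j ≤ q.2) :
    ∃ i, (i, j) ∈ T := by
  induction T generalizing p with
  | nil => simp at hp
  | cons x t ih =>
    obtain rfl : x = p := by simpa using hp
    rcases hpj.eq_or_lt with rfl | hlt
    · exact ⟨x.1, List.mem_cons_self⟩
    cases t with
    | nil =>
      obtain rfl : x = q := by simpa using hq
      omega
    | cons y t =>
      have hy : y.2 ≤ x.2 + 1 := by
        rcases (List.isChain_cons_cons.mp hc).1 with ⟨-, h⟩ | ⟨-, h⟩ | ⟨-, h⟩ <;> omega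
      obtain ⟨i, hi⟩ := ih hc.tail rfl (by simpa using hq) (by omega)
      exact ⟨i, List.mem_cons_of_mem _ hi⟩

end List.IsChain

namespace IsTraversal

variable {m m' : ℕ} {T : List (ℕ × ℕ)}

theorem isChain (hT : IsTraversal m m' T) : T.IsChain FrStep := hT.2.2.2

theorem le_of_mem (hT : IsTraversal m m' T) {p : ℕ × ℕ} (hp : p ∈ T) : p ≤ (m - 1, m' - 1) := by
  obtain ⟨-, -, hl, hc⟩ := hT
  rw [List.getLast?_eq_some_getLast (List.ne_nil_of_mem hp), Option.some_inj] at hl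
  exact hl ▸ hc.pairwise_le_of_frStep.rel_getLast hp

theorem exists_mem_snd_eq (hT : IsTraversal m m' T) {j : ℕ} (hj : j < m') : ∃ i, (i, j) ∈ T :=
  hT.isChain.exists_mem_snd_eq_of_frStep hT.2.1 hT.2.2.1 (Nat.zero_le j) (by simp; omega)

theorem existsUnique_of_dist_succ_gt {α : Type*} [PseudoMetricSpace α] {P Q : List α} {d : α}
    {r : ℝ} (hT : IsTraversal P.length Q.length T)
    (hdist : ∀ p ∈ T, dist (P.getD p.1 d) (Q.getD p.2 d) ≤ r)
    (hsep : ∀ k, k + 1 < P.length → 2 * r < dist (P.getD k d) (P.getD (k + 1) d))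
    {j : ℕ} (hj : j < Q.length) : ∃! i, (i, j) ∈ T := by
  obtain ⟨i, hi⟩ := hT.exists_mem_snd_eq hj
  have no_succ : ∀ k, (k, j) ∈ T → (k + 1, j) ∉ T := by
    intro k hk hk'
    have hlt : k + 1 < P.length := by have := (hT.le_of_mem hk').1; simp at this; omega
    have := dist_triangle_right (P.getD k d) (P.getD (k + 1) d) (Q.getD j d)
    linarith [hsep k hlt, hdist _ hk, hdist _ hk']
  refine ⟨i, hi, fun i' hi' ↦ ?_⟩
  rcases lt_trichotomy i' i with h | h | h
  · exact absurd (hT.isChain.succ_mem_of_frStep hi' hi h) (no_succ i' hi')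
  · exact h
  · exact absurd (hT.isChain.succ_mem_of_frStep hi hi' h) (no_succ i hi)

end IsTraversal

theorem Aseq_succ (a : ℕ) : Aseq (a + 1) = 1 :: -3 :: Aseq a := by
  simp [Aseq, List.replicate_succ]

theorem Aseq_getD {a k : ℕ} (hk : k < (Aseq a).length) :
    (Aseq a).getD k 0 = if Even k then 1 else -3 := by
  induction a generalizing k with
  | zero => simp [Aseq] at hk; simp [hk, Aseq]
  | succ a ih =>
    rw [Aseq_succ]
    match k with
    | 0 => simp
    | 1 => simp
    | k + 2 =>
      rw [Aseq_succ] at hk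
      simpa [Nat.even_add] using ih (k := k) (by simpa using hk)

theorem Aseq_dist_getD_succ {a k : ℕ} (hk : k + 1 < (Aseq a).length) :
    dist ((Aseq a).getD k 0) ((Aseq a).getD (k + 1) 0) = 4 := by
  rw [Aseq_getD (by omega), Aseq_getD hk, Real.dist_eq]
  by_cases h : Even k <;> norm_num [h, Nat.even_add_one]

theorem Aseq_traversal_unique_match_general (a : ℕ) (M : List ℝ)
    (T : List (ℕ × ℕ)) (hT : IsTraversal (Aseq a).length M.length T)
    (hdist : ∀ p ∈ T, dist ((Aseq a).getD p.1 0) (M.getD p.2 0) ≤ 1) :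
    ∀ j < M.length, ∃! i : ℕ, (i, j) ∈ T := fun _ hj ↦
  hT.existsUnique_of_dist_succ_gt hdist
    (fun _ hk ↦ by rw [Aseq_dist_getD_succ hk]; norm_num) hj

theorem Aseq_traversal_unique_match (a : ℕ) (M : List ℝ) (hM : M ≠ [])
    (T : List (ℕ × ℕ)) (hT : IsTraversal (Aseq a).length M.length T)
    (hdist : ∀ p ∈ T, dist ((Aseq a).getD p.1 0) (M.getD p.2 0) ≤ 1) :
    ∀ j < M.length, ∃! i : ℕ, (i, j) ∈ T :=
  Aseq_traversal_unique_match_general a M T hT hdist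
end

section
/- Let B^b = ⟨−1, 3, −1, 3, ..., −1⟩ be the real sequence with b occurrences of 3 interleaved with −1's (starting and ending with −1). If M is a sequence of reals with d_DF(B^b, M) ≤ 1, then M contains at least b elements with value in [2, 4], and between any two such elements matched to distinct 3's of B^b there is an element of M with value in [−2, 0]. -/
open Set

theorem List.IsChain.exists_mem_fst_eq_of_frStep :
    ∀ {l : List (ℕ × ℕ)} {p q : ℕ × ℕ}, l.IsChain FrStep → l.head? = some p →
      l.getLast? = some q → ∀ i, p.1 ≤ i → i ≤ q.1 → ∃ j, (i, j) ∈ l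
  | [], _, _, _, hp, _, _, _, _ => by simp at hp
  | [a], p, q, _, hp, hq, i, hpi, hiq => by
    simp only [List.head?_cons, List.getLast?_singleton, Option.some.injEq] at hp hq
    subst hp hq
    exact ⟨a.2, by simp [show i = a.1 by omega]⟩
  | a :: b :: l, p, q, hl, hp, hq, i, hpi, hiq => by
    simp only [List.head?_cons, Option.some.injEq] at hp
    subst hp
    rw [List.isChain_cons_cons] at hl
    obtain rfl | hai := eq_or_lt_of_le hpi
    · exact ⟨a.2, List.mem_cons_self⟩
    have hbi : b.1 ≤ i := by rcases hl.1 with ⟨h, -⟩ | ⟨h, -⟩ | ⟨h, -⟩ <;> omega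
    obtain ⟨j, hj⟩ := exists_mem_fst_eq_of_frStep hl.2 rfl (by rwa [List.getLast?_cons_cons] at hq)
      i hbi hiq
    exact ⟨j, List.mem_cons_of_mem _ hj⟩

namespace IsTraversal

variable {m m' : ℕ} {T : List (ℕ × ℕ)} (hT : IsTraversal m m' T)
include hT

theorem pairwise_le : T.Pairwise (· ≤ ·) :=
  List.isChain_iff_pairwise.mp (hT.2.2.2.imp fun _ _ => FrStep.le)

theorem le_total_of_mem {p q : ℕ × ℕ} (hp : p ∈ T) (hq : q ∈ T) : p ≤ q ∨ q ≤ p := by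
  obtain rfl | hne := eq_or_ne p q
  · exact .inl le_rfl
  · exact (hT.pairwise_le.imp Relation.SymmGen.of_rel).forall hp hq hne

theorem snd_le_of_fst_lt {p q : ℕ × ℕ} (hp : p ∈ T) (hq : q ∈ T) (h : p.1 < q.1) : p.2 ≤ q.2 :=
  (hT.le_total_of_mem hp hq).elim (fun hpq => hpq.2) fun hqp => absurd hqp.1 h.not_ge

theorem le_last {p : ℕ × ℕ} (hp : p ∈ T) : p ≤ (m - 1, m' - 1) := by
  obtain ⟨ys, rfl⟩ := List.getLast?_eq_some_iff.mp hT.2.2.1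
  rcases List.mem_append.mp hp with hp | hp
  · exact (List.pairwise_append.mp hT.pairwise_le).2.2 p hp _ (List.mem_singleton_self _)
  · exact (List.mem_singleton.mp hp).le

theorem exists_mem_fst_eq {i : ℕ} (hi : i < m) : ∃ j, (i, j) ∈ T :=
  hT.2.2.2.exists_mem_fst_eq_of_frStep hT.2.1 hT.2.2.1 i (Nat.zero_le i) (by simp only; omega)

theorem exists_mem_between {i₁ i₂ j₁ j₂ i : ℕ} (h₁ : (i₁, j₁) ∈ T) (h₂ : (i₂, j₂) ∈ T)
    (hi₁ : i₁ < i) (hi₂ : i < i₂) : ∃ j, (i, j) ∈ T ∧ j₁ ≤ j ∧ j ≤ j₂ := by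
  have hi : i < m := by have := (Prod.le_def.mp (hT.le_last h₂)).1; simp only at this; omega
  obtain ⟨j, hj⟩ := hT.exists_mem_fst_eq hi
  exact ⟨j, hj, hT.snd_le_of_fst_lt h₁ hj hi₁, hT.snd_le_of_fst_lt hj h₂ hi₂⟩

end IsTraversal

theorem Bseq_succ (b : ℕ) : Bseq (b + 1) = -1 :: 3 :: Bseq b := by
  simp [Bseq, List.replicate_succ]

theorem Bseq_length (b : ℕ) : (Bseq b).length = 2 * b + 1 := by
  induction b with
  | zero => simp [Bseq]
  | succ b ih => simp only [Bseq_succ, List.length_cons, ih]; ring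

theorem Bseq_getD {b i : ℕ} (hi : i ≤ 2 * b) :
    (Bseq b).getD i 0 = if i % 2 = 0 then -1 else 3 := by
  induction b generalizing i with
  | zero =>
    obtain rfl : i = 0 := by omega
    simp [Bseq]
  | succ b ih =>
    match i with
    | 0 => simp [Bseq]
    | 1 => simp [Bseq_succ]
    | k + 2 =>
      rw [Bseq_succ, show (k + 2) % 2 = k % 2 by omega]
      exact ih (by omega)

theorem Bseq_getD_eq_three_iff {b i : ℕ} : (Bseq b).getD i 0 = 3 ↔ i % 2 = 1 ∧ i < 2 * b := by
  constructor
  · intro h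
    by_cases hi : i ≤ 2 * b
    · rw [Bseq_getD hi] at h
      split_ifs at h
      · norm_num at h
      · omega
    · rw [List.getD_eq_default _ _ (by rw [Bseq_length]; omega)] at h
      norm_num at h
  · rintro ⟨hodd, hi⟩
    rw [Bseq_getD hi.le, if_neg (by omega)]

section Matching

variable {b : ℕ} {M : List ℝ} {T : List (ℕ × ℕ)}
  (hdist : ∀ p ∈ T, dist ((Bseq b).getD p.1 0) (M.getD p.2 0) ≤ 1)
include hdist

theorem mem_Icc_of_Bseq_eq_three {i j : ℕ} (hp : (i, j) ∈ T) (h : (Bseq b).getD i 0 = 3) :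
    M.getD j 0 ∈ Icc (2 : ℝ) 4 := by
  have := Set.mem_Icc_iff_abs_le.mp (hdist _ hp)
  rw [h] at this
  norm_num at this
  exact this

theorem mem_Icc_of_Bseq_eq_neg_one {i j : ℕ} (hp : (i, j) ∈ T) (h : (Bseq b).getD i 0 = -1) :
    M.getD j 0 ∈ Icc (-2 : ℝ) 0 := by
  have := Set.mem_Icc_iff_abs_le.mp (hdist _ hp)
  rw [h] at this
  norm_num at this
  exact this

theorem exists_neg_between_of_Bseq_eq_three (hT : IsTraversal (Bseq b).length M.length T)
    {i₁ i₂ j₁ j₂ : ℕ} (h₁ : (i₁, j₁) ∈ T) (h₂ : (i₂, j₂) ∈ T) (hi : i₁ < i₂)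
    (h3₁ : (Bseq b).getD i₁ 0 = 3) (h3₂ : (Bseq b).getD i₂ 0 = 3) :
    ∃ j, j₁ < j ∧ j < j₂ ∧ M.getD j 0 ∈ Icc (-2 : ℝ) 0 := by
  obtain ⟨hodd₁, hlt₁⟩ := Bseq_getD_eq_three_iff.mp h3₁
  obtain ⟨hodd₂, -⟩ := Bseq_getD_eq_three_iff.mp h3₂
  obtain ⟨j, hj, hj₁, hj₂⟩ := hT.exists_mem_between h₁ h₂ (Nat.lt_succ_self i₁) (by omega)
  have hneg := mem_Icc_of_Bseq_eq_neg_one hdist hj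
    (by rw [Bseq_getD (by omega), if_pos (by omega)])
  have hpos₁ := mem_Icc_of_Bseq_eq_three hdist h₁ h3₁
  have hpos₂ := mem_Icc_of_Bseq_eq_three hdist h₂ h3₂
  refine ⟨j, lt_of_le_of_ne hj₁ ?_, lt_of_le_of_ne hj₂ ?_, hneg⟩
  · rintro rfl; linarith [hneg.2, hpos₁.1]
  · rintro rfl; linarith [hneg.2, hpos₂.1]

end Matching

theorem Bseq_match_structure (b : ℕ) (M : List ℝ)
    (T : List (ℕ × ℕ)) (hT : IsTraversal (Bseq b).length M.length T)
    (hdist : ∀ p ∈ T, dist ((Bseq b).getD p.1 0) (M.getD p.2 0) ≤ 1) :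
    (∃ f : Fin b → ℕ, StrictMono f ∧
      ∀ k, f k < M.length ∧ M.getD (f k) 0 ∈ Set.Icc (2 : ℝ) 4) ∧
    (∀ i₁ i₂ j₁ j₂, (i₁, j₁) ∈ T → (i₂, j₂) ∈ T → i₁ ≠ i₂ → j₁ < j₂ →
      (Bseq b).getD i₁ 0 = 3 → (Bseq b).getD i₂ 0 = 3 →
      ∃ j, j₁ < j ∧ j < j₂ ∧ M.getD j 0 ∈ Set.Icc (-2 : ℝ) 0) := by
  have hvisit (k : Fin b) : ∃ j, (2 * (k : ℕ) + 1, j) ∈ T :=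
    hT.exists_mem_fst_eq (by rw [Bseq_length]; omega)
  choose f hf using hvisit
  have h3 (k : Fin b) : (Bseq b).getD (2 * (k : ℕ) + 1) 0 = 3 :=
    Bseq_getD_eq_three_iff.mpr ⟨by omega, by omega⟩
  refine ⟨⟨f, fun k k' hk => ?_, fun k => ?_⟩, fun i₁ i₂ j₁ j₂ h₁ h₂ hi hj h3₁ h3₂ => ?_⟩
  · obtain ⟨j, hj₁, hj₂, -⟩ := exists_neg_between_of_Bseq_eq_three hdist hT (hf k) (hf k')
      (by simp only [Fin.lt_def] at hk; omega) (h3 k) (h3 k')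
    exact hj₁.trans hj₂
  · have hval := mem_Icc_of_Bseq_eq_three hdist (hf k) (h3 k)
    refine ⟨lt_of_not_ge fun hlen => ?_, hval⟩
    rw [List.getD_eq_default _ _ hlen] at hval
    norm_num at hval
  · rcases hT.le_total_of_mem h₁ h₂ with h | h
    · exact exists_neg_between_of_Bseq_eq_three hdist hT h₁ h₂ (lt_of_le_of_ne h.1 hi) h3₁ h3₂
    · exact absurd h.2 hj.not_ge
end

section
/- Let 𝒫 be a finite set of point sequences in ℝ^d, let C be a sequence of ℓ points with max_{P∈𝒫} d_DF(C,P) ≤ α·δ*, where δ* = max_{P∈𝒫} d_DF(M*,P) for some sequence M* of ℓ points. Suppose for each vertex c_i of C we pick a point m_i (from some input curve) with ‖m_i − c_i‖ ≤ max_{P∈𝒫} d_DF(C,P). Then the sequence M = ⟨m_1,...,m_ℓ⟩ satisfies max_{P∈𝒫} d_DF(M,P) ≤ 2α·δ*. -/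
open Set

/-!
Moving every vertex of `C` by at most `B = max_P d_DF(C, P)` gives `M`; any traversal of `C` and
`P` is also one of `M` and `P`, and the triangle inequality costs at most `B` per pair, so
`d_DF(M, P) ≤ d_DF(C, P) + B ≤ 2B ≤ 2αδ*`.
-/

def traversalCosts {α : Type*} [PseudoMetricSpace α] [Inhabited α] (P Q : List α) : Set ℝ :=
  { r : ℝ | ∃ T : List (ℕ × ℕ), IsTraversal P.length Q.length T ∧
    ∀ p ∈ T, dist (P.getD p.1 default) (Q.getD p.2 default) ≤ r }

lemma IsTraversal.append_singleton {m m' n n' : ℕ} {T : List (ℕ × ℕ)}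
    (hT : IsTraversal (m + 1) (m' + 1) T) (hstep : FrStep (m, m') (n, n')) :
    IsTraversal (n + 1) (n' + 1) (T ++ [(n, n')]) := by
  obtain ⟨hne, hhead, hlast, hchain⟩ := hT
  refine ⟨by simp, by rwa [List.head?_append_of_ne_nil _ hne], by simp, ?_⟩
  refine hchain.append (List.isChain_singleton _) fun x hx y hy => ?_
  simp only [hlast, Nat.add_sub_cancel, Option.mem_def, Option.some.injEq, List.head?_cons]
    at hx hy
  exact hx ▸ hy ▸ hstep

lemma exists_isTraversal_succ (m m' : ℕ) : ∃ T, IsTraversal (m + 1) (m' + 1) T := by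
  induction m with
  | zero =>
    induction m' with
    | zero => exact ⟨[(0, 0)], List.cons_ne_nil _ _, rfl, rfl, List.isChain_singleton _⟩
    | succ m' ih =>
      obtain ⟨T, hT⟩ := ih
      exact ⟨_, hT.append_singleton (Or.inr (Or.inl ⟨rfl, rfl⟩))⟩
  | succ m ih =>
    obtain ⟨T, hT⟩ := ih
    exact ⟨_, hT.append_singleton (Or.inl ⟨rfl, rfl⟩)⟩

lemma exists_isTraversal (m m' : ℕ) : ∃ T, IsTraversal m m' T := by
  obtain ⟨T, hT⟩ := exists_isTraversal_succ (m - 1) (m' - 1)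
  exact ⟨T, by simpa only [IsTraversal, Nat.add_sub_cancel] using hT⟩

section traversalCosts

variable {α : Type*} [PseudoMetricSpace α] [Inhabited α]

lemma nonneg_of_mem_traversalCosts {P Q : List α} {r : ℝ} (hr : r ∈ traversalCosts P Q) :
    0 ≤ r := by
  obtain ⟨T, ⟨hne, -⟩, hbound⟩ := hr
  obtain ⟨p, hp⟩ := List.exists_mem_of_ne_nil T hne
  exact dist_nonneg.trans (hbound p hp)

lemma bddBelow_traversalCosts (P Q : List α) : BddBelow (traversalCosts P Q) :=
  ⟨0, fun _ => nonneg_of_mem_traversalCosts⟩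

lemma traversalCosts_nonempty (P Q : List α) : (traversalCosts P Q).Nonempty := by
  obtain ⟨T, hT⟩ := exists_isTraversal P.length Q.length
  obtain ⟨r, hr⟩ := (T.map fun p => dist (P.getD p.1 default) (Q.getD p.2 default)).finite_toSet
    |>.bddAbove
  exact ⟨r, T, hT, fun p hp => hr (List.mem_map.2 ⟨p, hp, rfl⟩)⟩

lemma dDF_nonneg (P Q : List α) : 0 ≤ dDF P Q :=
  Real.sInf_nonneg fun _ => nonneg_of_mem_traversalCosts

lemma add_mem_traversalCosts {P Q R : List α} {ε r : ℝ} (hlen : P.length = Q.length)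
    (hPQ : ∀ i, dist (P.getD i default) (Q.getD i default) ≤ ε)
    (hr : r ∈ traversalCosts Q R) : r + ε ∈ traversalCosts P R := by
  obtain ⟨T, hT, hbound⟩ := hr
  refine ⟨T, hlen ▸ hT, fun p hp => ?_⟩
  calc dist (P.getD p.1 default) (R.getD p.2 default)
      ≤ dist (P.getD p.1 default) (Q.getD p.1 default)
        + dist (Q.getD p.1 default) (R.getD p.2 default) := dist_triangle _ _ _
    _ ≤ r + ε := by linarith [hPQ p.1, hbound p hp]

lemma dDF_le_dDF_add {P Q : List α} (R : List α) {ε : ℝ} (hlen : P.length = Q.length)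
    (hε : 0 ≤ ε) (hPQ : ∀ i < P.length, dist (P.getD i default) (Q.getD i default) ≤ ε) :
    dDF P R ≤ dDF Q R + ε := by
  have hPQ' : ∀ i, dist (P.getD i default) (Q.getD i default) ≤ ε := by
    intro i
    by_cases hi : i < P.length
    · exact hPQ i hi
    · rw [List.getD_eq_default _ _ (by omega), List.getD_eq_default _ _ (by omega), dist_self]
      exact hε
  rw [← sub_le_iff_le_add]
  refine le_csInf (traversalCosts_nonempty Q R) fun r hr => ?_
  rw [sub_le_iff_le_add]
  exact csInf_le (bddBelow_traversalCosts P R) (add_mem_traversalCosts hlen hPQ' hr)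

end traversalCosts

theorem middle_curve_two_alpha_approx_general {d ℓ : ℕ} (𝒮 : Finset (List (EuclideanSpace ℝ (Fin d))))
    (h𝒮 : 𝒮.Nonempty)
    (C M : List (EuclideanSpace ℝ (Fin d)))
    (hC : C.length = ℓ) (hM : M.length = ℓ)
    (α δstar : ℝ)
    (hcenter : 𝒮.sup' h𝒮 (fun P => dDF C P) ≤ α * δstar)
    (hpick : ∀ i < ℓ, dist (M.getD i default) (C.getD i default) ≤
      𝒮.sup' h𝒮 (fun P => dDF C P)) :
    𝒮.sup' h𝒮 (fun P => dDF M P) ≤ 2 * α * δstar := by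
  set B := 𝒮.sup' h𝒮 (fun P => dDF C P)
  obtain ⟨P₀, hP₀⟩ := h𝒮
  have hB : 0 ≤ B := (dDF_nonneg C P₀).trans (Finset.le_sup' _ hP₀)
  refine Finset.sup'_le _ _ fun P hP => ?_
  calc dDF M P ≤ dDF C P + B := dDF_le_dDF_add P (hM.trans hC.symm) hB (hM ▸ hpick)
    _ ≤ B + B := by gcongr; exact Finset.le_sup' (fun P => dDF C P) hP
    _ ≤ 2 * α * δstar := by linarith

theorem middle_curve_two_alpha_approx {d ℓ : ℕ} (𝒮 : Finset (List (EuclideanSpace ℝ (Fin d))))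
    (h𝒮 : 𝒮.Nonempty) (hne : ∀ P ∈ 𝒮, P ≠ [])
    (C Mstar M : List (EuclideanSpace ℝ (Fin d)))
    (hC : C.length = ℓ) (hCne : C ≠ []) (hM : M.length = ℓ) (hMstar : Mstar.length = ℓ)
    (α δstar : ℝ)
    (hδstar : δstar = 𝒮.sup' h𝒮 (fun P => dDF Mstar P))
    (hcenter : 𝒮.sup' h𝒮 (fun P => dDF C P) ≤ α * δstar)
    (hpick : ∀ i < ℓ, dist (M.getD i default) (C.getD i default) ≤
      𝒮.sup' h𝒮 (fun P => dDF C P))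
    (hmem : ∀ i < ℓ, ∃ P ∈ 𝒮, M.getD i default ∈ P) :
    𝒮.sup' h𝒮 (fun P => dDF M P) ≤ 2 * α * δstar :=
  middle_curve_two_alpha_approx_general 𝒮 h𝒮 C M hC hM α δstar hcenter hpick
end
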